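/- Let x₀ = k/2^{2m} be a balanced dyadic rational of order m, i.e., a dyadic rational with binary expansion 0.ε₁ε₂…ε_{2m} satisfying Σ_{j=1}^{2m} (-1)^{ε_j} = 0. Then for all x ∈ [k/2^{2m}, (k+1)/2^{2m}], T(x) = T(x₀) + 2^{-2m} T(2^{2m}(x - x₀)). -/

import Mathlib

open Set

/-- `phi x` is the distance from `x` to the nearest integer. -/
noncomputable def phi (x : ℝ) : ℝ := min (Int.fract x) (1 - Int.fract x)

/-- The Takagi function. -/
noncomputable def T (x : ℝ) : ℝ := ∑' n : ℕ, (1/2 : ℝ)^n * phi (2^n * x)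

/-- The `j`-th binary digit of `x ∈ [0,1)` (terminating expansion for dyadics). -/
noncomputable def eps (x : ℝ) (j : ℕ) : ℤ := ⌊2^j * x⌋ % 2

/-- `D k x = ∑_{j=1}^k (-1)^{ε_j(x)}`. -/
noncomputable def D (k : ℕ) (x : ℝ) : ℤ :=
  ∑ j ∈ Finset.Icc 1 k, (-1 : ℤ)^((eps x j).toNat)

/-- `x₀` is a balanced dyadic rational of order `m`. -/
def BalancedDyadic (m : ℕ) (x₀ : ℝ) : Prop :=
  x₀ ∈ Set.Ico (0:ℝ) 1 ∧ (∃ k : ℕ, x₀ = (k : ℝ) / 4^m) ∧ D (2*m) x₀ = 0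

/-- The generation of a balanced dyadic rational of order `m`. -/
noncomputable def generation (m : ℕ) (x₀ : ℝ) : ℕ :=
  ((Finset.Icc 1 (2*m)).filter (fun j => D j x₀ = 0)).card

/-- The local level set of `x`. -/
def LocalLevelSet (x : ℝ) : Set ℝ :=
  {x' ∈ Set.Ico (0:ℝ) 1 | ∀ j : ℕ, |D j x'| = |D j x|}

/-- The level set of `T` at level `y`. -/
def L (y : ℝ) : Set ℝ := {x ∈ Set.Icc (0:ℝ) 1 | T x = y}

/-!
For `n < N` the term `2⁻ⁿ φ(2ⁿ x)` is affine on the dyadic interval `[x₀, x₀ + 2⁻ᴺ]`, with slope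
`(-1)^{ε_{n+1}(x₀)}`, so the first `N` terms of `T` grow by `D_N(x₀) (x - x₀)`, which vanishes when
`x₀` is balanced. The remaining terms add up to `2⁻ᴺ T(2ᴺ x)`, and since `2ᴺ x₀` is an integer and
`T` has period `1`, this is `2⁻ᴺ T(2ᴺ (x - x₀))`.
-/

lemma phi_nonneg (x : ℝ) : 0 ≤ phi x :=
  le_min (Int.fract_nonneg x) (by linarith [Int.fract_lt_one x])

lemma phi_le_half (x : ℝ) : phi x ≤ 1 / 2 := by
  rcases le_total (Int.fract x) (1 / 2) with h | h
  · exact (min_le_left _ _).trans h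
  · exact (min_le_right _ _).trans (by linarith)

lemma phi_add_intCast (x : ℝ) (n : ℤ) : phi (x + n) = phi x := by
  rw [phi, phi, Int.fract_add_intCast]

lemma phi_intCast (n : ℤ) : phi n = 0 := by
  simp [phi]

lemma phi_of_nonneg_of_le_half {x : ℝ} (h₀ : 0 ≤ x) (h₁ : x ≤ 1 / 2) : phi x = x := by
  rw [phi, Int.fract_eq_self.mpr ⟨h₀, by linarith⟩, min_eq_left (by linarith)]

lemma phi_of_half_le_of_le_one {x : ℝ} (h₀ : 1 / 2 ≤ x) (h₁ : x ≤ 1) : phi x = 1 - x := by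
  rcases h₁.lt_or_eq with h₁ | rfl
  · rw [phi, Int.fract_eq_self.mpr ⟨by linarith, h₁⟩, min_eq_right (by linarith)]
  · simpa using phi_intCast 1

lemma phi_add_of_mem_half_interval {j : ℤ} {y t : ℝ} (hy : j ≤ 2 * y) (ht : 0 ≤ t)
    (hyt : 2 * (y + t) ≤ j + 1) :
    phi (y + t) = phi y + (-1) ^ (j % 2).toNat * t := by
  set q := j / 2
  have hshift : ∀ z : ℝ, phi z = phi (z - q) := fun z => by
    simpa using phi_add_intCast (z - q) q
  have hj : (j : ℝ) = 2 * q + (j % 2 : ℤ) := by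
    exact_mod_cast (by omega : j = 2 * q + j % 2)
  rw [hshift (y + t), hshift y]
  rcases Int.emod_two_eq_zero_or_one j with h | h <;> rw [h] at hj ⊢ <;> push_cast at hj
  · rw [phi_of_nonneg_of_le_half (by linarith) (by linarith),
      phi_of_nonneg_of_le_half (by linarith) (by linarith)]
    norm_num
    ring
  · rw [phi_of_half_le_of_le_one (by linarith) (by linarith),
      phi_of_half_le_of_le_one (by linarith) (by linarith)]
    norm_num
    ring

lemma summable_takagi (x : ℝ) : Summable fun n : ℕ => (1 / 2 : ℝ) ^ n * phi (2 ^ n * x) :=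
  (summable_geometric_two).of_nonneg_of_le (fun n => mul_nonneg (by positivity) (phi_nonneg _))
    fun n => mul_le_of_le_one_right (by positivity) ((phi_le_half _).trans (by norm_num))

lemma T_add_intCast (x : ℝ) (k : ℤ) : T (x + k) = T x := by
  refine tsum_congr fun n => ?_
  rw [mul_add, show (2 : ℝ) ^ n * k = ((2 ^ n * k : ℤ) : ℝ) by push_cast; ring, phi_add_intCast]

lemma T_intCast (k : ℤ) : T k = 0 := by
  rw [← zero_add (k : ℝ), T_add_intCast]
  simp [T, phi]

lemma T_eq_sum_range_add (N : ℕ) (x : ℝ) :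
    T x = ∑ n ∈ Finset.range N, (1 / 2 : ℝ) ^ n * phi (2 ^ n * x) + 1 / 2 ^ N * T (2 ^ N * x) := by
  rw [T, ← (summable_takagi x).sum_add_tsum_nat_add N, T, ← tsum_mul_left]
  congr 1
  refine tsum_congr fun n => ?_
  rw [pow_add, pow_add, mul_assoc ((2 : ℝ) ^ n), ← one_div_pow]
  ring

lemma intCast_add_one_le_mul_floor_add_one {z : ℝ} {d : ℕ} {k : ℤ} (hd : 0 < d)
    (hk : d * z = k) : (k : ℝ) + 1 ≤ d * (⌊z⌋ + 1) := by
  have hlt : (k : ℝ) < d * (⌊z⌋ + 1) :=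
    hk ▸ mul_lt_mul_of_pos_left (Int.lt_floor_add_one z) (by exact_mod_cast hd)
  have : k + 1 ≤ d * (⌊z⌋ + 1) := by exact_mod_cast hlt
  exact_mod_cast this

lemma phi_two_pow_mul_add {N n : ℕ} (hn : n < N) {x₀ s : ℝ} {k : ℤ} (hk : 2 ^ N * x₀ = k)
    (hs₀ : 0 ≤ s) (hs₁ : s ≤ 1 / 2 ^ N) :
    phi (2 ^ n * (x₀ + s)) = phi (2 ^ n * x₀) + (-1) ^ (eps x₀ (n + 1)).toNat * (2 ^ n * s) := by
  set j := ⌊2 ^ (n + 1) * x₀⌋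
  have hpow : (2 : ℝ) ^ N = 2 ^ (N - (n + 1)) * 2 ^ (n + 1) := by
    rw [← pow_add]; congr 1; omega
  have hgrid : (k : ℝ) + 1 ≤ 2 ^ (N - (n + 1)) * (j + 1) := by
    have := intCast_add_one_le_mul_floor_add_one (d := 2 ^ (N - (n + 1))) (by positivity)
      (z := 2 ^ (n + 1) * x₀) (by push_cast; rw [← mul_assoc, ← hpow, hk])
    push_cast at this
    exact this
  have hs : 2 ^ N * s ≤ 1 := by
    rwa [le_div_iff₀ (by positivity), mul_comm] at hs₁
  rw [mul_add]
  refine phi_add_of_mem_half_interval (j := j) ?_ (by positivity) ?_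
  · calc (j : ℝ) ≤ 2 ^ (n + 1) * x₀ := Int.floor_le _
      _ = 2 * (2 ^ n * x₀) := by ring
  · refine le_of_mul_le_mul_left ?_ (by positivity : (0 : ℝ) < 2 ^ (N - (n + 1)))
    calc (2 : ℝ) ^ (N - (n + 1)) * (2 * (2 ^ n * x₀ + 2 ^ n * s))
        = 2 ^ N * x₀ + 2 ^ N * s := by rw [hpow]; ring
      _ ≤ 2 ^ (N - (n + 1)) * (j + 1) := by linarith

lemma sum_range_phi_two_pow_mul_add {N : ℕ} {x₀ s : ℝ} {k : ℤ} (hk : 2 ^ N * x₀ = k)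
    (hs₀ : 0 ≤ s) (hs₁ : s ≤ 1 / 2 ^ N) :
    ∑ n ∈ Finset.range N, (1 / 2 : ℝ) ^ n * phi (2 ^ n * (x₀ + s)) =
      ∑ n ∈ Finset.range N, (1 / 2 : ℝ) ^ n * phi (2 ^ n * x₀) + D N x₀ * s := by
  have hD : (D N x₀ : ℝ) = ∑ n ∈ Finset.range N, (-1 : ℝ) ^ (eps x₀ (n + 1)).toNat := by
    rw [D, ← Finset.Ico_add_one_right_eq_Icc, Finset.sum_Ico_eq_sum_range]
    push_cast
    simp only [add_comm 1]
  rw [hD, Finset.sum_mul, ← Finset.sum_add_distrib]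
  refine Finset.sum_congr rfl fun n hn => ?_
  rw [phi_two_pow_mul_add (Finset.mem_range.mp hn) hk hs₀ hs₁, mul_add, ← mul_assoc,
    mul_comm _ ((-1 : ℝ) ^ _), mul_assoc, ← mul_assoc _ (2 ^ n), one_div_pow,
    one_div_mul_cancel (by positivity), one_mul]

theorem T_add_of_dyadic {N : ℕ} {x₀ s : ℝ} {k : ℤ} (hk : 2 ^ N * x₀ = k)
    (hs₀ : 0 ≤ s) (hs₁ : s ≤ 1 / 2 ^ N) :
    T (x₀ + s) = T x₀ + D N x₀ * s + 1 / 2 ^ N * T (2 ^ N * s) := by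
  rw [T_eq_sum_range_add N (x₀ + s), T_eq_sum_range_add N x₀,
    sum_range_phi_two_pow_mul_add hk hs₀ hs₁, mul_add, hk, add_comm (k : ℝ), T_add_intCast, T_intCast]
  ring

theorem takagi_self_similarity_general (m : ℕ) (k : ℕ) (x₀ : ℝ)
    (hx₀ : x₀ = (k : ℝ) / 2^(2*m))
    (hbal : D (2*m) x₀ = 0)
    (x : ℝ) (hx : x ∈ Set.Icc x₀ (x₀ + 1/2^(2*m))) :
    T x = T x₀ + (1/2^(2*m)) * T (2^(2*m) * (x - x₀)) := by
  have hk : 2 ^ (2 * m) * x₀ = ((k : ℤ) : ℝ) := by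
    rw [hx₀]; push_cast; field_simp
  have h := T_add_of_dyadic hk (s := x - x₀) (by linarith [hx.1]) (by linarith [hx.2])
  rwa [add_sub_cancel, hbal, Int.cast_zero, zero_mul, add_zero] at h

theorem takagi_self_similarity (m : ℕ) (k : ℕ) (x₀ : ℝ)
    (hx₀ : x₀ = (k : ℝ) / 2^(2*m)) (hmem : x₀ ∈ Set.Ico (0:ℝ) 1)
    (hbal : D (2*m) x₀ = 0)
    (x : ℝ) (hx : x ∈ Set.Icc x₀ (x₀ + 1/2^(2*m))) :
    T x = T x₀ + (1/2^(2*m)) * T (2^(2*m) * (x - x₀)) :=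
  takagi_self_similarity_general m k x₀ hx₀ hbal x hx
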